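/- In dimension 4, every maximal set of distinct Hadamard vectors can be partitioned into exactly 2 Hadamard matrices; that is, the 8 vectors of such a set split into two disjoint 4-element subsets, each of which is the set of rows of a 4×4 Hadamard matrix. -/

import Mathlib

/-- A Hadamard vector: all entries are `±1`. -/
def IsHadamardVector {ι : Type*} (x : ι → ℝ) : Prop :=
  ∀ i, x i = 1 ∨ x i = -1

/-- A Hadamard matrix: all entries `±1` and rows pairwise orthogonal. -/
def IsHadamardMatrix {ι : Type*} [Fintype ι] (H : Matrix ι ι ℝ) : Prop :=
  (∀ i j, H i j = 1 ∨ H i j = -1) ∧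
  ∀ i j, i ≠ j → ∑ k, H i k * H j k = 0

/-- A maximal set of distinct Hadamard vectors: a set of Hadamard vectors containing,
for every Hadamard vector `x`, exactly one of `x`, `-x`. -/
def IsMaximalHadamardSet {ι : Type*} (S : Set (ι → ℝ)) : Prop :=
  (∀ x ∈ S, IsHadamardVector x) ∧
  ∀ x : ι → ℝ, IsHadamardVector x → Xor' (x ∈ S) (-x ∈ S)

/-!
Negating rows of a Hadamard matrix keeps it Hadamard. In dimension 4 the eight Hadamard vectors
with first entry `1` are the rows of two Hadamard matrices, Sylvester's matrix and the one obtained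
from it by negating the last column, and they represent every pair `±x` exactly once. Replacing
each of these rows by whichever of `±row` lies in `S` therefore splits `S` into two Hadamard
matrices.
-/

variable {ι : Type*}

theorem IsHadamardVector.neg {x : ι → ℝ} (hx : IsHadamardVector x) : IsHadamardVector (-x) :=
  fun i => by rcases hx i with h | h <;> simp [h]

theorem IsHadamardMatrix.of_row_eq_or_eq_neg [Fintype ι] {H H' : Matrix ι ι ℝ}
    (hH : IsHadamardMatrix H) (hH' : ∀ i, H' i = H i ∨ H' i = -H i) : IsHadamardMatrix H' := by
  refine ⟨fun i j => ?_, fun i j hij => ?_⟩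
  · rcases hH' i with h | h <;> rw [h]
    · exact hH.1 i j
    · simpa [neg_eq_iff_eq_neg, or_comm] using hH.1 i j
  · have horth := hH.2 i j hij
    rcases hH' i with hi | hi <;> rcases hH' j with hj | hj <;>
      simpa [hi, hj, Finset.sum_neg_distrib] using horth

open Classical in
noncomputable def signRep (S : Set (ι → ℝ)) (v : ι → ℝ) : ι → ℝ :=
  if v ∈ S then v else -v

theorem signRep_eq_or_eq_neg (S : Set (ι → ℝ)) (v : ι → ℝ) :
    signRep S v = v ∨ signRep S v = -v := by
  unfold signRep; split_ifs <;> simp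

theorem signRep_of_mem {S : Set (ι → ℝ)} {v : ι → ℝ} (hv : v ∈ S) : signRep S v = v :=
  if_pos hv

namespace IsMaximalHadamardSet

variable {S : Set (ι → ℝ)} {v : ι → ℝ}

theorem signRep_mem (hS : IsMaximalHadamardSet S) (hv : IsHadamardVector v) :
    signRep S v ∈ S := by
  unfold signRep
  rcases hS.2 v hv with ⟨h, -⟩ | ⟨h, hn⟩
  · simp [h]
  · simp [h, hn]

theorem signRep_neg (hS : IsMaximalHadamardSet S) (hv : IsHadamardVector v) :
    signRep S (-v) = signRep S v := by
  unfold signRep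
  rcases hS.2 v hv with ⟨h, hn⟩ | ⟨hn, h⟩ <;> simp [h, hn]

theorem signRep_eq_signRep_iff (hS : IsMaximalHadamardSet S) {w : ι → ℝ}
    (hw : IsHadamardVector w) : signRep S v = signRep S w ↔ v = w ∨ v = -w := by
  refine ⟨fun h => ?_, ?_⟩
  · rcases signRep_eq_or_eq_neg S v with hv' | hv' <;>
      rcases signRep_eq_or_eq_neg S w with hw' | hw' <;>
      rw [hv', hw'] at h <;> grind
  · rintro (rfl | rfl)
    · rfl
    · exact hS.signRep_neg hw

theorem exists_partition_of_cover [Fintype ι] (hS : IsMaximalHadamardSet S)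
    {A B : Matrix ι ι ℝ} (hA : IsHadamardMatrix A) (hB : IsHadamardMatrix B)
    (hAB : ∀ r s, ¬(A r = B s ∨ A r = -B s))
    (hcover : ∀ x, IsHadamardVector x →
      ∃ r, (x = A r ∨ x = -A r) ∨ (x = B r ∨ x = -B r)) :
    ∃ H₁ H₂ : Matrix ι ι ℝ, IsHadamardMatrix H₁ ∧ IsHadamardMatrix H₂ ∧
      Disjoint (Set.range fun r => H₁ r) (Set.range fun r => H₂ r) ∧
      (Set.range fun r => H₁ r) ∪ (Set.range fun r => H₂ r) = S := by
  refine ⟨fun r => signRep S (A r), fun r => signRep S (B r),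
    hA.of_row_eq_or_eq_neg fun r => signRep_eq_or_eq_neg S (A r),
    hB.of_row_eq_or_eq_neg fun r => signRep_eq_or_eq_neg S (B r), ?_, ?_⟩
  · rw [Set.disjoint_left]
    rintro _ ⟨r, rfl⟩ ⟨s, hs⟩
    exact hAB r s ((hS.signRep_eq_signRep_iff (hB.1 s)).1 hs.symm)
  · refine subset_antisymm ?_ fun x hx => ?_
    · rintro _ (⟨r, rfl⟩ | ⟨r, rfl⟩)
      exacts [hS.signRep_mem (hA.1 r), hS.signRep_mem (hB.1 r)]
    · have hxS : signRep S x = x := signRep_of_mem hx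
      obtain ⟨r, hrA | hrB⟩ := hcover x (hS.1 x hx)
      · exact Or.inl ⟨r, ((hS.signRep_eq_signRep_iff (hA.1 r)).2 hrA).symm.trans hxS⟩
      · exact Or.inr ⟨r, ((hS.signRep_eq_signRep_iff (hB.1 r)).2 hrB).symm.trans hxS⟩

end IsMaximalHadamardSet

def sylvester4 : Matrix (Fin 4) (Fin 4) ℝ :=
  !![1, 1, 1, 1; 1, -1, 1, -1; 1, 1, -1, -1; 1, -1, -1, 1]

/-- Its rows have an odd number of entries `-1`, those of `sylvester4` an even number. -/
def sylvester4Odd : Matrix (Fin 4) (Fin 4) ℝ :=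
  !![1, 1, 1, -1; 1, -1, 1, 1; 1, 1, -1, 1; 1, -1, -1, -1]

theorem isHadamardMatrix_sylvester4 : IsHadamardMatrix sylvester4 := by
  refine ⟨fun i j => ?_, fun i j hij => ?_⟩ <;> fin_cases i <;> fin_cases j <;>
    simp_all [sylvester4, Fin.sum_univ_four]

theorem isHadamardMatrix_sylvester4Odd : IsHadamardMatrix sylvester4Odd := by
  refine ⟨fun i j => ?_, fun i j hij => ?_⟩ <;> fin_cases i <;> fin_cases j <;>
    simp_all [sylvester4Odd, Fin.sum_univ_four]

theorem sylvester4_ne_pm_sylvester4Odd (r s : Fin 4) :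
    ¬(sylvester4 r = sylvester4Odd s ∨ sylvester4 r = -sylvester4Odd s) := by
  fin_cases r <;> fin_cases s <;>
    simp [sylvester4, sylvester4Odd, funext_iff, Fin.forall_fin_succ] <;> norm_num

theorem IsHadamardVector.exists_eq_sylvester4_or_sylvester4Odd {y : Fin 4 → ℝ}
    (hy : IsHadamardVector y) (h0 : y 0 = 1) : ∃ r, y = sylvester4 r ∨ y = sylvester4Odd r := by
  have hy' : y = ![1, y 1, y 2, y 3] := by ext i; fin_cases i <;> simp [h0]
  rw [hy']
  rcases hy 1 with h1 | h1 <;> rcases hy 2 with h2 | h2 <;> rcases hy 3 with h3 | h3 <;>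
    simp [h1, h2, h3, sylvester4, sylvester4Odd, funext_iff, Fin.forall_fin_succ,
      Fin.exists_fin_succ]

theorem IsHadamardVector.exists_eq_pm_sylvester4_or_pm_sylvester4Odd {x : Fin 4 → ℝ}
    (hx : IsHadamardVector x) : ∃ r, (x = sylvester4 r ∨ x = -sylvester4 r) ∨
      (x = sylvester4Odd r ∨ x = -sylvester4Odd r) := by
  rcases hx 0 with h0 | h0
  · obtain ⟨r, hr | hr⟩ := hx.exists_eq_sylvester4_or_sylvester4Odd h0
    exacts [⟨r, .inl (.inl hr)⟩, ⟨r, .inr (.inl hr)⟩]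
  · obtain ⟨r, hr | hr⟩ := hx.neg.exists_eq_sylvester4_or_sylvester4Odd (by simp [h0])
    exacts [⟨r, .inl (.inr (neg_eq_iff_eq_neg.1 hr))⟩,
      ⟨r, .inr (.inr (neg_eq_iff_eq_neg.1 hr))⟩]

theorem hadamard_partition_dim_four (S : Set (Fin 4 → ℝ)) (hS : IsMaximalHadamardSet S) :
    ∃ H₁ H₂ : Matrix (Fin 4) (Fin 4) ℝ,
      IsHadamardMatrix H₁ ∧ IsHadamardMatrix H₂ ∧
      Disjoint (Set.range fun r => H₁ r) (Set.range fun r => H₂ r) ∧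
      (Set.range fun r => H₁ r) ∪ (Set.range fun r => H₂ r) = S :=
  hS.exists_partition_of_cover isHadamardMatrix_sylvester4 isHadamardMatrix_sylvester4Odd
    sylvester4_ne_pm_sylvester4Odd
    fun _ hx => hx.exists_eq_pm_sylvester4_or_pm_sylvester4Odd
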